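/- arXiv:math/0207002 — 2 statements merged into one kernel-verified Lean document; each statement's English description precedes it below -/
import Mathlib

section
/- If $K_n \to K$ in the Hausdorff metric with all $K_n$ having at most $m$ connected components, then $K$ has at most $m$ connected components. -/
/-!
If `Klim` had more than `m` components, a discrete quotient of its compact, totally disconnected
space of components would split `Klim` into more than `m` pairwise disjoint nonempty compact
pieces. For small `δ` their `δ`-thickenings are still pairwise disjoint, and a set within
Hausdorff distance `δ` of `Klim` is covered by these open thickenings and meets each of them, so
it too splits into more than `m` nonempty relatively clopen pieces.
-/

open Filter Function Metric Set
open scoped Topology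

theorem finite_and_natCard_le_of_forall_injective {α : Type*} {m : ℕ}
    (h : ∀ k (p : Fin k → α), Injective p → k ≤ m) : Finite α ∧ Nat.card α ≤ m := by
  have hfinite : Finite α := by
    by_contra hα
    have := not_finite_iff_infinite.1 hα
    have := h (m + 1) _ ((Infinite.natEmbedding α).injective.comp Fin.val_injective)
    omega
  have := Fintype.ofFinite α
  exact ⟨hfinite, by
    simpa [Nat.card_eq_fintype_card] using h _ _ (Fintype.equivFin α).symm.injective⟩

theorem DiscreteQuotient.exists_injective_proj_comp {Y : Type*} [TopologicalSpace Y]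
    [T2Space Y] [CompactSpace Y] [TotallyDisconnectedSpace Y] {ι : Type*} [Finite ι]
    {p : ι → Y} (hp : Injective p) : ∃ Q : DiscreteQuotient Y, Injective (Q.proj ∘ p) := by
  -- a finer quotient separates at least the points a coarser one does
  have hsep : ∀ i j, ∀ᶠ Q : DiscreteQuotient Y in atBot, i ≠ j → Q.proj (p i) ≠ Q.proj (p j) := by
    refine fun i j => eventually_imp_distrib_left.2 fun hij => ?_
    obtain ⟨Q₀, hQ₀⟩ : ∃ Q₀ : DiscreteQuotient Y, Q₀.proj (p i) ≠ Q₀.proj (p j) := by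
      by_contra! h
      exact hij (hp (DiscreteQuotient.eq_of_forall_proj_eq h))
    filter_upwards [eventually_le_atBot Q₀] with Q hQ heq
    exact hQ₀ (by rw [← ofLE_proj hQ, ← ofLE_proj hQ, heq])
  obtain ⟨Q, hQ⟩ := (eventually_all.2 fun i => eventually_all.2 (hsep i)).exists
  exact ⟨Q, fun i j h => by_contra fun hij => hQ i j hij h⟩

theorem exists_injective_connectedComponents_of_isOpen_cover {X ι : Type*} [TopologicalSpace X]
    {U : ι → Set X} (hU : ∀ i, IsOpen (U i)) (hdisj : Pairwise (Disjoint on U))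
    (hcover : ∀ x, ∃ i, x ∈ U i) (hne : ∀ i, (U i).Nonempty) :
    ∃ g : ι → ConnectedComponents X, Injective g := by
  have hclopen : ∀ i, IsClopen (U i) := fun i => by
    refine ⟨isOpen_compl_iff.1 <| isOpen_iff_forall_mem_open.2 fun x hx => ?_, hU i⟩
    obtain ⟨j, hj⟩ := hcover x
    have hji : j ≠ i := by rintro rfl; exact hx hj
    exact ⟨U j, (hdisj hji).subset_compl_right, hU j, hj⟩
  choose x hx using hne
  refine ⟨fun i => x i, fun i j hij => ?_⟩
  have hxj : x j ∈ U i :=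
    (hclopen i).connectedComponent_subset (hx i) (ConnectedComponents.coe_eq_coe'.1 hij.symm)
  by_contra h
  exact Set.disjoint_left.1 (hdisj h) hxj (hx j)

theorem exists_pos_pairwise_disjoint_thickening {E ι : Type*} [EMetricSpace E] [Finite ι]
    {A : ι → Set E} (hA : ∀ i, IsCompact (A i)) (hdisj : Pairwise (Disjoint on A)) :
    ∃ δ > 0, Pairwise (Disjoint on fun i => thickening δ (A i)) := by
  have hsep : ∀ i j, ∀ᶠ δ in 𝓝[>] (0 : ℝ), i ≠ j →
      Disjoint (thickening δ (A i)) (thickening δ (A j)) := by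
    refine fun i j => eventually_imp_distrib_left.2 fun hij => ?_
    obtain ⟨δ₀, hδ₀, h⟩ := (hdisj hij).exists_thickenings (hA i) (hA j).isClosed
    filter_upwards [Ioc_mem_nhdsGT hδ₀] with δ hδ
    exact h.mono (thickening_mono hδ.2 _) (thickening_mono hδ.2 _)
  obtain ⟨δ, hδ, hδ0⟩ :=
    ((eventually_all.2 fun i => eventually_all.2 (hsep i)).and self_mem_nhdsWithin).exists
  exact ⟨δ, hδ0, fun i j hij => hδ i j hij⟩

theorem exists_injective_connectedComponents_of_hausdorffEDist_lt {E β : Type*} [EMetricSpace E]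
    [TopologicalSpace β] [DiscreteTopology β] {S : Set E} (hS : IsCompact S) {f : S → β}
    (hf : Continuous f) (hsurj : Surjective f) :
    ∃ ε > 0, ∀ T : Set E, hausdorffEDist T S < ε →
      ∃ g : β → ConnectedComponents T, Injective g := by
  have := isCompact_iff_compactSpace.1 hS
  have : Finite β := by
    rw [← finite_univ_iff, ← hsurj.range_eq]
    exact (isCompact_range hf).finite_of_discrete
  let A : β → Set E := fun b => (↑) '' (f ⁻¹' {b})
  have hA : ∀ b, IsCompact (A b) := fun b =>
    ((isClosed_discrete {b}).preimage hf).isCompact.image continuous_subtype_val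
  have hAdisj : Pairwise (Disjoint on A) := fun b c hbc =>
    (disjoint_image_iff Subtype.val_injective).2 ((disjoint_singleton.2 hbc).preimage f)
  obtain ⟨δ, hδ, hδdisj⟩ := exists_pos_pairwise_disjoint_thickening hA hAdisj
  refine ⟨ENNReal.ofReal δ, ENNReal.ofReal_pos.2 hδ, fun T hT => ?_⟩
  refine exists_injective_connectedComponents_of_isOpen_cover
    (U := fun b => ((↑) : T → E) ⁻¹' thickening δ (A b))
    (fun b => isOpen_thickening.preimage continuous_subtype_val)
    (fun b c hbc => (hδdisj hbc).preimage Subtype.val) (fun x => ?_) (fun b => ?_)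
  · obtain ⟨y, hy, hxy⟩ := exists_edist_lt_of_hausdorffEDist_lt x.2 hT
    exact ⟨f ⟨y, hy⟩, (mem_thickening_iff_exists_edist_lt _ _).2 ⟨y, ⟨⟨y, hy⟩, rfl, rfl⟩, hxy⟩⟩
  · obtain ⟨y, rfl⟩ := hsurj b
    obtain ⟨x, hx, hxy⟩ :=
      exists_edist_lt_of_hausdorffEDist_lt y.2 (hausdorffEDist_comm.trans_lt hT)
    exact ⟨⟨x, hx⟩, (mem_thickening_iff_exists_edist_lt _ _).2
      ⟨y, ⟨y, rfl, rfl⟩, edist_comm x y ▸ hxy⟩⟩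

theorem components_le_of_hausdorff_limit_general
    (m : ℕ)
    (K : ℕ → Set (EuclideanSpace ℝ (Fin 2))) (Klim : Set (EuclideanSpace ℝ (Fin 2)))
    (hfin : ∀ n, Finite (ConnectedComponents (K n)))
    (hcard : ∀ n, Nat.card (ConnectedComponents (K n)) ≤ m)
    (hKlim : IsCompact Klim)
    (hconv : Tendsto (fun n => EMetric.hausdorffEdist (K n) Klim) atTop (𝓝 0)) :
    Finite (ConnectedComponents Klim) ∧ Nat.card (ConnectedComponents Klim) ≤ m := by
  have := isCompact_iff_compactSpace.1 hKlim
  refine finite_and_natCard_le_of_forall_injective fun k p hp => ?_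
  obtain ⟨Q, hQ⟩ := DiscreteQuotient.exists_injective_proj_comp hp
  obtain ⟨ε, hε, hnear⟩ := exists_injective_connectedComponents_of_hausdorffEDist_lt hKlim
    (Q.proj_continuous.comp ConnectedComponents.continuous_coe)
    (Q.proj_surjective.comp ConnectedComponents.surjective_coe)
  obtain ⟨n, hn⟩ := (hconv.eventually (gt_mem_nhds hε)).exists
  obtain ⟨g, hg⟩ := hnear (K n) hn
  have := hfin n
  calc k = Nat.card (Fin k) := (Nat.card_fin k).symm
    _ ≤ Nat.card Q := Nat.card_le_card_of_injective _ hQ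
    _ ≤ Nat.card (ConnectedComponents (K n)) := Nat.card_le_card_of_injective g hg
    _ ≤ m := hcard n

/-- If compact sets `K n ⊆ Ω`, each with at most `m` connected components, converge to
`Klim` in the Hausdorff metric, then `Klim` has at most `m` connected components. -/
theorem components_le_of_hausdorff_limit
    (Ω : Set (EuclideanSpace ℝ (Fin 2))) (hΩ : IsCompact Ω)
    (m : ℕ) (hm : 1 ≤ m)
    (K : ℕ → Set (EuclideanSpace ℝ (Fin 2))) (Klim : Set (EuclideanSpace ℝ (Fin 2)))
    (hKc : ∀ n, IsCompact (K n)) (hKΩ : ∀ n, K n ⊆ Ω)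
    (hfin : ∀ n, Finite (ConnectedComponents (K n)))
    (hcard : ∀ n, Nat.card (ConnectedComponents (K n)) ≤ m)
    (hKlim : IsCompact Klim) (hKlimΩ : Klim ⊆ Ω)
    (hconv : Tendsto (fun n => EMetric.hausdorffEdist (K n) Klim) atTop (𝓝 0)) :
    Finite (ConnectedComponents Klim) ∧ Nat.card (ConnectedComponents Klim) ≤ m :=
  components_le_of_hausdorff_limit_general m K Klim hfin hcard hKlim hconv
end

section
/- One-step discrete energy estimate: with the above notation, $\|\nabla u_{r+1}\|^2 + \mathcal{H}^1(K_{r+1}) + \lambda\|u_{r+1}-u_r\|^2 \le \|\nabla u_r\|^2 + \mathcal{H}^1(K_r) + 2\int_{t_r}^{t_{r+1}} (\nabla u_r|\nabla\dot g(\tau))\,d\tau + \big(\int_{t_r}^{t_{r+1}}\|\nabla\dot g(\tau)\|\,d\tau\big)^2 + \lambda\big(\int_{t_r}^{t_{r+1}}\|\dot g(\tau)\|\,d\tau\big)^2$. -/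
open MeasureTheory intervalIntegral
open scoped ENNReal RealInnerProductSpace

/-- One-step discrete energy estimate.  Here `L`, `G` play the roles of `L²(Ω)` and
`L²(Ω;ℝ²)`; `u0, Du0` are the approximate solution and its gradient at time `tr`;
`(u1, Du1, K1)` minimizes `‖∇u‖² + ℋ¹(K) + λ‖u - u0‖²` among admissible triples
(`Adm v Dv K` encodes: `K ⊇ K0` compact with at most `m` components, `v ∈ H¹(Ω \ K)`
with `v = g(t_{r+1})` on `∂_D Ω \ K`); in particular the competitor
`(u0 + g(t_{r+1}) - g(t_r), K0)` is admissible.  Then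
`‖Du1‖² + ℋ¹(K1) + λ‖u1 - u0‖² ≤ ‖Du0‖² + ℋ¹(K0) + 2∫(∇u0|∇ġ) + (∫‖∇ġ‖)² + λ(∫‖ġ‖)²`. -/
theorem one_step_energy_estimate
    {L G : Type*} [NormedAddCommGroup L] [InnerProductSpace ℝ L] [CompleteSpace L]
    [NormedAddCommGroup G] [InnerProductSpace ℝ G] [CompleteSpace G]
    (lam : ℝ) (hlam : 0 < lam) (T tr tr1 : ℝ)
    (h0 : 0 ≤ tr) (htr : tr < tr1) (h1 : tr1 ≤ T)
    (m : ℕ) (hm : 1 ≤ m)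
    (g gdot : ℝ → L) (Dg Dgdot : ℝ → G)
    (hgint : IntervalIntegrable gdot volume tr tr1)
    (hDgint : IntervalIntegrable Dgdot volume tr tr1)
    (hgnint : IntervalIntegrable (fun τ => ‖gdot τ‖) volume tr tr1)
    (hDgnint : IntervalIntegrable (fun τ => ‖Dgdot τ‖) volume tr tr1)
    (hgftc : g tr1 - g tr = ∫ τ in tr..tr1, gdot τ)
    (hDgftc : Dg tr1 - Dg tr = ∫ τ in tr..tr1, Dgdot τ)
    (Adm : L → G → Set (EuclideanSpace ℝ (Fin 2)) → Prop)
    (u0 u1 : L) (Du0 Du1 : G) (K0 K1 : Set (EuclideanSpace ℝ (Fin 2)))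
    (hK0c : IsCompact K0) (hK1c : IsCompact K1) (hK01 : K0 ⊆ K1)
    (hK0fin : μH[1] K0 ≠ ⊤) (hK1fin : μH[1] K1 ≠ ⊤)
    (hadm1 : Adm u1 Du1 K1)
    (hcompet : Adm (u0 + g tr1 - g tr) (Du0 + Dg tr1 - Dg tr) K0)
    (hmin : ∀ v Dv (K : Set (EuclideanSpace ℝ (Fin 2))), Adm v Dv K →
      ‖Du1‖ ^ 2 + (μH[1] K1).toReal + lam * ‖u1 - u0‖ ^ 2 ≤
        ‖Dv‖ ^ 2 + (μH[1] K).toReal + lam * ‖v - u0‖ ^ 2) :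
    ‖Du1‖ ^ 2 + (μH[1] K1).toReal + lam * ‖u1 - u0‖ ^ 2 ≤
      ‖Du0‖ ^ 2 + (μH[1] K0).toReal +
        2 * (∫ τ in tr..tr1, ⟪Du0, Dgdot τ⟫) +
        (∫ τ in tr..tr1, ‖Dgdot τ‖) ^ 2 +
        lam * (∫ τ in tr..tr1, ‖gdot τ‖) ^ 2 := by
  have hle := le_of_lt htr
  have hbound := hmin _ _ _ hcompet
  set I : G := ∫ τ in tr..tr1, Dgdot τ with hI
  set J : L := ∫ τ in tr..tr1, gdot τ with hJ
  have hDeq : Du0 + Dg tr1 - Dg tr = Du0 + I := by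
    rw [add_sub_assoc, hDgftc]
  have hueq : u0 + g tr1 - g tr - u0 = J := by
    rw [add_sub_assoc, hgftc]; abel
  rw [hDeq, hueq] at hbound
  have hnormsq : ‖Du0 + I‖ ^ 2 = ‖Du0‖ ^ 2 + 2 * ⟪Du0, I⟫ + ‖I‖ ^ 2 :=
    norm_add_sq_real Du0 I
  have hinner : ⟪Du0, I⟫ = ∫ τ in tr..tr1, ⟪Du0, Dgdot τ⟫ := by
    rw [hI, intervalIntegral.integral_of_le hle, intervalIntegral.integral_of_le hle]
    exact (integral_inner hDgint.1 Du0).symm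
  have hInorm : ‖I‖ ≤ ∫ τ in tr..tr1, ‖Dgdot τ‖ :=
    intervalIntegral.norm_integral_le_integral_norm hle
  have hJnorm : ‖J‖ ≤ ∫ τ in tr..tr1, ‖gdot τ‖ :=
    intervalIntegral.norm_integral_le_integral_norm hle
  have hIsq : ‖I‖ ^ 2 ≤ (∫ τ in tr..tr1, ‖Dgdot τ‖) ^ 2 :=
    pow_le_pow_left₀ (norm_nonneg _) hInorm 2
  have hJsq : ‖J‖ ^ 2 ≤ (∫ τ in tr..tr1, ‖gdot τ‖) ^ 2 :=
    pow_le_pow_left₀ (norm_nonneg _) hJnorm 2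
  calc ‖Du1‖ ^ 2 + (μH[1] K1).toReal + lam * ‖u1 - u0‖ ^ 2
      ≤ ‖Du0 + I‖ ^ 2 + (μH[1] K0).toReal + lam * ‖J‖ ^ 2 := hbound
    _ = ‖Du0‖ ^ 2 + (μH[1] K0).toReal + 2 * (∫ τ in tr..tr1, ⟪Du0, Dgdot τ⟫)
          + ‖I‖ ^ 2 + lam * ‖J‖ ^ 2 := by rw [hnormsq, hinner]; ring
    _ ≤ ‖Du0‖ ^ 2 + (μH[1] K0).toReal + 2 * (∫ τ in tr..tr1, ⟪Du0, Dgdot τ⟫)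
          + (∫ τ in tr..tr1, ‖Dgdot τ‖) ^ 2 + lam * (∫ τ in tr..tr1, ‖gdot τ‖) ^ 2 := by
        gcongr
end
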